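/- For the dominance order g' ⪯ g iff g' = g + B̃n with n ∈ N^{I_uf}, and any fixed g, g' ∈ Z^I, the interval {g'' ∈ Z^I : g' ⪯ g'' ⪯ g} is finite. -/
import Mathlib


/-- The dominance order: `g' ⪯ g` iff `g' = g + B̃ n` for some `n ∈ ℕ^{I_uf}`. -/
def dominates {I : Type*} {uf : I → Prop} [Fintype {i // uf i}]
    (B : Matrix I {i // uf i} ℤ) (g' g : I → ℤ) : Prop :=
  ∃ n : {i // uf i} → ℤ, (∀ j, 0 ≤ n j) ∧ g' = g + B.mulVec n

/-- For `B̃` of full rank with skew-symmetrizable principal part,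
any dominance-order interval `{g'' : g' ⪯ g'' ⪯ g}` is finite. -/
theorem dominance_interval_finite
    {I : Type*} [Fintype I] [DecidableEq I] (uf : I → Prop) [DecidablePred uf]
    (B : Matrix I {i // uf i} ℤ)
    (hB : Function.Injective B.mulVec)
    (δ : {i // uf i} → ℤ) (hδ : ∀ k, 0 < δ k)
    (hskew : ∀ i k : {i // uf i}, δ i * B (i : I) k = -(δ k * B (k : I) i))
    (g g' : I → ℤ) :
    {g'' : I → ℤ | dominates B g'' g ∧ dominates B g' g''}.Finite := by
  by_cases hs : ∃ s : {i // uf i} → ℤ, g' = g + B.mulVec s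
  · obtain ⟨s, hsval⟩ := hs
    apply Set.Finite.subset
      ((Set.finite_Icc (0 : {i // uf i} → ℤ) s).image (fun n => g + B.mulVec n))
    rintro g'' ⟨⟨n, hn, rfl⟩, ⟨m, hm, hm'⟩⟩
    refine ⟨n, ?_, rfl⟩
    have key : B.mulVec (n + m) = B.mulVec s := by
      rw [Matrix.mulVec_add]
      have h2 := hsval
      rw [hm'] at h2
      funext i
      have := congrFun h2 i
      simp only [Pi.add_apply] at this ⊢
      linarith
    have hnm : n + m = s := hB key
    constructor
    · intro j; exact hn j
    · intro j
      have h1 := congrFun hnm j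
      simp only [Pi.add_apply] at h1
      have := hm j
      dsimp
      linarith
  · convert Set.finite_empty
    ext g''
    simp only [Set.mem_setOf_eq, Set.mem_empty_iff_false, iff_false]
    rintro ⟨⟨n, hn, rfl⟩, ⟨m, hm, hm'⟩⟩
    refine hs ⟨n + m, ?_⟩
    rw [Matrix.mulVec_add, hm']
    abel
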